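/- Let P be a finite bounded poset with a TCL-labeling λ taking values in the integers, let Γ: m₁,…,m_t be a total order on the maximal chains of P that agrees with the lexicographic order on maximal chains induced by λ, and let λ' be the CE-labeling of P determined by Γ. Suppose x ⋖ u ⋖ b and x ⋖ y ⋖ d with u ≠ y, and let r be a root of x. If λ(r,x,u) < λ(r,x,y), then λ'(r,x,u) < λ'(r,x,y). Also, if λ(r,x,u) = λ(r,x,y) and λ(r∪{u},u,b) < λ(r∪{y},y,d), then λ'(r∪{u},u,b) < λ'(r∪{y},y,d). -/

import Mathlib

open scoped Classical

variable {P : Type*} [PartialOrder P] [BoundedOrder P]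

/-- `CoverList l` : consecutive entries of `l` are cover relations. -/
def CoverList : List P → Prop
  | x :: y :: t => x ⋖ y ∧ CoverList (y :: t)
  | _ => True

/-- `SatFromTo l x y` : `l` is a saturated chain (i.e. a maximal chain of the interval
`[x,y]`) starting at `x` and ending at `y`. -/
def SatFromTo (l : List P) (x y : P) : Prop :=
  l ≠ [] ∧ l.head? = some x ∧ l.getLast? = some y ∧ CoverList l

/-- `m` is a maximal chain of the bounded poset `P`. -/
def MaxChainOfP (m : List P) : Prop := SatFromTo m ⊥ ⊤

/-- `r` is a root of `x`, i.e. a maximal chain of `[⊥, x]` (it contains `x`). -/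
def RootOf (r : List P) (x : P) : Prop := SatFromTo r ⊥ x

/-- The label sequence of a chain (the second argument, which starts at the last
element of the root `r`) with respect to a chain-edge labeling `lab`. -/
def labelSeq {Λ : Type*} (lab : List P → P → P → Λ) : List P → List P → List Λ
  | r, x :: y :: t => lab r x y :: labelSeq lab (r ++ [y]) (y :: t)
  | _, _ => []

/-- The pair of rooted cover relations `[u,v]_r`, `[v,w]_{r∪{v}}` is a topological
ascent: its label sequence lexicographically strictly precedes the label sequence of
every other maximal chain of `[u,w]_r`. -/
def TopAscent (lab : List P → P → P → ℤ) (r : List P) (u v w : P) : Prop :=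
  ∀ c : List P, SatFromTo c u w → c ≠ [u, v, w] →
    List.Lex (· < ·) (labelSeq lab r [u, v, w]) (labelSeq lab r c)

/-- The chain (second argument) with root `r` is topologically ascending. -/
def TopAscending (lab : List P → P → P → ℤ) : List P → List P → Prop
  | r, u :: v :: w :: t => TopAscent lab r u v w ∧ TopAscending lab (r ++ [v]) (v :: w :: t)
  | _, _ => True

/-- TCL-labeling : every rooted interval has a unique topologically ascending
maximal chain. -/
def IsTCLLabeling (lab : List P → P → P → ℤ) : Prop :=
  ∀ x y : P, x ≤ y → ∀ r : List P, RootOf r x →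
    ∃! c : List P, SatFromTo c x y ∧ TopAscending lab r c

/-- CC-labeling : a TCL-labeling such that in every rooted interval distinct maximal
chains get distinct label sequences, none of which is a prefix of another. -/
def IsCCLabeling (lab : List P → P → P → ℤ) : Prop :=
  IsTCLLabeling lab ∧
    ∀ x y : P, x ≤ y → ∀ r : List P, RootOf r x →
      ∀ c c' : List P, SatFromTo c x y → SatFromTo c' x y → c ≠ c' →
        ¬ labelSeq lab r c <+: labelSeq lab r c'

/-- CL-labeling with labels in an arbitrary poset `Λ`. -/
def IsCLLabeling {Λ : Type*} [PartialOrder Λ] (lab : List P → P → P → Λ) : Prop :=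
  ∀ x y : P, x ≤ y → ∀ r : List P, RootOf r x →
    ∃ c : List P, (SatFromTo c x y ∧ List.Chain' (· < ·) (labelSeq lab r c)) ∧
      (∀ c' : List P, SatFromTo c' x y → List.Chain' (· < ·) (labelSeq lab r c') → c' = c) ∧
      (∀ c' : List P, SatFromTo c' x y → c' ≠ c →
        List.Lex (· < ·) (labelSeq lab r c) (labelSeq lab r c'))

def TCLShellable (P : Type*) [PartialOrder P] [BoundedOrder P] : Prop :=
  ∃ lab : List P → P → P → ℤ, IsTCLLabeling lab

def CCShellable (P : Type*) [PartialOrder P] [BoundedOrder P] : Prop :=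
  ∃ lab : List P → P → P → ℤ, IsCCLabeling lab

def CLShellable (P : Type*) [PartialOrder P] [BoundedOrder P] : Prop :=
  ∃ (Λ : Type) (_ : PartialOrder Λ) (lab : List P → P → P → Λ), IsCLLabeling lab

/-- `P` is graded : all maximal chains of `P` have the same length. -/
def Graded (P : Type*) [PartialOrder P] [BoundedOrder P] : Prop :=
  ∀ c c' : List P, MaxChainOfP c → MaxChainOfP c' → c.length = c'.length

/-- `Γ` is a total order `m₁, …, m_t` on the maximal chains of `P`. -/
def Enumerates (Γ : List (List P)) : Prop :=
  Γ.Nodup ∧ ∀ m : List P, m ∈ Γ ↔ MaxChainOfP m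

/-- `Γ` is a total order on the maximal chains which agrees with (is consistent with)
the lexicographic order on maximal chains induced by `lab`. -/
def AgreesWithLex (lab : List P → P → P → ℤ) (Γ : List (List P)) : Prop :=
  Enumerates Γ ∧ ∀ i j : ℕ, i < j → j < Γ.length →
    ¬ List.Lex (· < ·) (labelSeq lab [(⊥ : P)] (Γ.getD j []))
        (labelSeq lab [(⊥ : P)] (Γ.getD i []))

/-- Position in `Γ` of the earliest maximal chain containing all elements of `l`. -/
noncomputable def fidx (Γ : List (List P)) (l : List P) : ℕ :=
  Γ.findIdx fun m => decide (∀ a ∈ l, a ∈ m)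

/-- `a'` witnesses that the earliest chain containing `r ∪ {a}` is "sandwiched" by
two chains containing `r ∪ {a'}`. -/
def Sandwiched (Γ : List (List P)) (r : List P) (x a a' : P) : Prop :=
  x ⋖ a' ∧ fidx Γ (r ++ [a']) < fidx Γ (r ++ [a]) ∧
    ∃ l : ℕ, fidx Γ (r ++ [a]) < l ∧ l < Γ.length ∧ ∀ w ∈ r ++ [a'], w ∈ Γ.getD l []

/-- The label (a position in `Γ`) that the CE-labeling determined by the total order
`Γ` assigns to the rooted cover relation `[x,a]_r`. -/
noncomputable def detLabel (Γ : List (List P)) (r : List P) (x a : P) : ℕ :=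
  if h : ∃ n : ℕ, ∃ a' : P, Sandwiched Γ r x a a' ∧ fidx Γ (r ++ [a']) = n then
    detLabel Γ r x (Nat.find_spec h).choose
  else fidx Γ (r ++ [a])
termination_by fidx Γ (r ++ [a])
decreasing_by exact ((Nat.find_spec h).choose_spec).1.2.1

/-- The CE-labeling of `P` determined by the total order `Γ` on maximal chains. -/
noncomputable def detLabeling (Γ : List (List P)) : List P → P → P → ℤ :=
  fun r x a => (detLabel Γ r x a : ℤ)

/-- `Ω` is a recursive first atom set (RFAS) for `P`. -/
def IsRFAS (Ω : List P → P → P → P) : Prop :=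
  (∀ c : List P, CoverList c → c.length ≤ 2) ∨
    ∀ x y : P, x < y → ∀ r : List P, RootOf r x →
      (x ⋖ Ω r x y ∧ Ω r x y ≤ y) ∧
      ∀ a : P, x ⋖ a → a < y →
        (a = Ω r x y ↔ a = Ω r x (Ω (r ++ [a]) a y)) ∧
        (a ≠ Ω r x y →
          ∃ (p : ℕ) (A B : ℕ → P), 1 ≤ p ∧
            (∀ i, 1 ≤ i → i ≤ p → x ⋖ A i ∧ A i ≤ y) ∧
            A p = Ω r x (Ω (r ++ [a]) a y) ∧ A 1 = Ω r x y ∧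
            ∀ i, 1 ≤ i → i ≤ p - 1 →
              B i = Ω (r ++ [A (i + 1)]) (A (i + 1)) y ∧ A i = Ω r x (B i))

/-- The chain (second argument, a saturated chain from the last element of the root to
`y`) is the first atom chain `c(r, x, y)` of the rooted interval with top `y`:
each step except possibly the last follows the first atoms of `Ω`. -/
def IsFAC (Ω : List P → P → P → P) (y : P) : List P → List P → Prop
  | r, x :: z :: t => (t ≠ [] → z = Ω r x y) ∧ IsFAC Ω y (r ++ [z]) (z :: t)
  | _, _ => True

/-- The chain (second argument) with root `r` contains a pseudo descent with respect
to `Ω`. -/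
def HasPseudoDescent (Ω : List P → P → P → P) : List P → List P → Prop
  | r, u :: v :: w :: t => v ≠ Ω r u w ∨ HasPseudoDescent Ω (r ++ [v]) (v :: w :: t)
  | _, _ => False

/-- `m → m'` : `m` is obtained from the maximal chain `m'` by replacing a pseudo
descent `x ⋖ y ⋖ z` of `m'` with the first atom chain `c(m^x, x, z)`. -/
def StepRel (Ω : List P → P → P → P) (m m' : List P) : Prop :=
  MaxChainOfP m ∧ MaxChainOfP m' ∧
    ∃ (x y z : P) (r d c : List P),
      RootOf r x ∧ x ⋖ y ∧ y ⋖ z ∧ y ≠ Ω r x z ∧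
      m' = r ++ y :: z :: d ∧
      SatFromTo c x z ∧ IsFAC Ω z r c ∧
      m = r ++ c.tail ++ d

/-- `Γ` is a linear extension of the partial order `⪯` (the reflexive-transitive
closure of `→`) on the maximal chains of `P`. -/
def LinExtOf (Ω : List P → P → P → P) (Γ : List (List P)) : Prop :=
  Enumerates Γ ∧ ∀ i j : ℕ, i < Γ.length → j < Γ.length →
    Relation.ReflTransGen (StepRel Ω) (Γ.getD i []) (Γ.getD j []) → i ≤ j

/-- `Γ`, a total order on the facets (maximal chains) of the order complex `Δ(P)`,
is a shelling order: for each `j` the intersection of the `j`-th facet with the union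
of the earlier ones is pure of dimension one less than that of the `j`-th facet. -/
def IsShelling (Γ : List (List P)) : Prop :=
  ∀ j : ℕ, 0 < j → j < Γ.length → ∀ S : Finset P,
    S ⊆ (Γ.getD j []).toFinset → (∃ i < j, S ⊆ (Γ.getD i []).toFinset) →
    ∃ T : Finset P, S ⊆ T ∧ T ⊆ (Γ.getD j []).toFinset ∧
      (∃ i < j, T ⊆ (Γ.getD i []).toFinset) ∧
      T.card + 1 = (Γ.getD j []).toFinset.card

/-- Condition (LC) for a linear extension `Γ` of `⪯`. -/
def LCCondition (Γ : List (List P)) : Prop :=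
  ∀ i j k : ℕ, i < j → j < k → k < Γ.length →
    ∀ (r : List P) (x y y' z : P), RootOf r x → x ⋖ y → y ⋖ z → x ⋖ y' →
      (∀ w ∈ r ++ [y, z], w ∈ Γ.getD i []) →
      (∀ w ∈ r ++ [y, z], w ∈ Γ.getD k []) →
      (∀ w ∈ r ++ [y'], w ∈ Γ.getD j []) → y' = y

/-- `Ω` is a labeling-compatible recursive first atom set (LCRFAS). -/
def IsLCRFAS (Ω : List P → P → P → P) : Prop :=
  IsRFAS Ω ∧ ∃ Γ : List (List P), LinExtOf Ω Γ ∧ LCCondition Γ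

/-- The CE-labeling `lab` is compatible with the RFAS `Ω` : in every rooted interval
the first atom lies on a lexicographically smallest maximal chain. -/
def Compatible (lab : List P → P → P → ℤ) (Ω : List P → P → P → P) : Prop :=
  ∀ x y : P, x < y → ∀ r : List P, RootOf r x →
    ∃ c : List P, SatFromTo c x y ∧ Ω r x y ∈ c ∧
      ∀ c' : List P, SatFromTo c' x y →
        ¬ List.Lex (· < ·) (labelSeq lab r c') (labelSeq lab r c)

/-!
Unwinding the recursive definition, `λ'(r, x, a)` is the position in `Γ` of the earliest chain
through `r ++ [a']`, for an atom `a'` reached from `a` by a sequence of sandwich steps. Because `Γ`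
is compatible with the lexicographic order, a sandwiched atom carries the same `λ`-label as the atom
it replaces, so `λ(r, x, a') = λ(r, x, a)`. A strict comparison of `λ`-labels then makes every
maximal chain through `r ++ [a']` lexicographically smaller than every chain through the other
rooted atom, and compatibility of `Γ` turns this into a strict comparison of positions.
-/

theorem List.Lex.of_isPrefix_of_length_eq {α : Type*} {R : α → α → Prop} {l₁ l₂ m₁ m₂ : List α}
    (h : List.Lex R l₁ l₂) (hlen : l₁.length = l₂.length) (h₁ : l₁ <+: m₁) (h₂ : l₂ <+: m₂) :
    List.Lex R m₁ m₂ := by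
  obtain ⟨t₁, rfl⟩ := h₁
  obtain ⟨t₂, rfl⟩ := h₂
  induction h with
  | nil => simp at hlen
  | cons _ ih => exact .cons (ih (by simpa using hlen))
  | rel hab => exact .rel hab

section Chains

variable {α : Type*} [PartialOrder α]

theorem coverList_iff_isChain : ∀ l : List α, CoverList l ↔ l.IsChain (· ⋖ ·)
  | [] | [_] => by simp [CoverList]
  | a :: b :: t => by rw [CoverList, coverList_iff_isChain (b :: t), List.isChain_cons_cons]

theorem CoverList.pairwise_lt {l : List α} (h : CoverList l) : l.Pairwise (· < ·) :=
  List.isChain_iff_pairwise.mp (((coverList_iff_isChain l).mp h).imp fun _ _ h => h.lt)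

theorem CoverList.prefix_of_subset :
    ∀ {s m : List α}, CoverList s → m.Pairwise (· < ·) → s.head? = m.head? → s ⊆ m → s <+: m
  | [], _, _, _, _, _ => List.nil_prefix
  | [_], _ :: _, _, _, hhead, _ => by simp_all
  | a :: b :: s, c :: m, hs, hm, hhead, hsub => by
    obtain rfl : a = c := by simpa using hhead
    have hab : a ⋖ b := hs.1
    have hgt : ∀ w ∈ b :: s, w ∈ m := fun w hw =>
      (List.mem_cons.mp (hsub (List.mem_cons_of_mem a hw))).resolve_left
        (((List.pairwise_cons.mp hs.pairwise_lt).1 w hw).ne')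
    obtain ⟨d, m, rfl⟩ := List.exists_cons_of_ne_nil (List.ne_nil_of_mem (hgt b (by simp)))
    have hdb : d ≤ b := by
      rcases List.mem_cons.mp (hgt b (by simp)) with h | h
      · exact h.ge
      · exact ((List.pairwise_cons.mp (List.pairwise_cons.mp hm).2).1 b h).le
    obtain rfl : d = b :=
      (hab.eq_or_eq ((List.pairwise_cons.mp hm).1 d (by simp)).le hdb).resolve_left
        ((List.pairwise_cons.mp hm).1 d (by simp)).ne'
    exact (List.prefix_cons_inj a).mpr
      (prefix_of_subset hs.2 (List.pairwise_cons.mp hm).2 rfl hgt)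

theorem SatFromTo.concat {l : List α} {a x u : α} (h : SatFromTo l a x) (hxu : x ⋖ u) :
    SatFromTo (l ++ [u]) a u := by
  obtain ⟨hne, hhead, hlast, hcov⟩ := h
  refine ⟨by simp, by rwa [List.head?_append_of_ne_nil _ hne], by simp, ?_⟩
  rw [coverList_iff_isChain] at hcov ⊢
  exact hcov.append (by simp) (by simp_all)

end Chains

theorem exists_maxChainOfP_append [Finite P] :
    ∀ (v : P) {s : List P}, SatFromTo s ⊥ v → ∃ t, MaxChainOfP (s ++ t) := by
  intro v
  induction v using WellFoundedGT.induction with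
  | _ v ih =>
    intro s hs
    rcases eq_or_lt_of_le (le_top : v ≤ ⊤) with rfl | hv
    · exact ⟨[], by simpa [MaxChainOfP] using hs⟩
    · obtain ⟨w, hvw, -⟩ := exists_covBy_le_of_lt hv
      obtain ⟨t, ht⟩ := ih w hvw.lt (hs.concat hvw)
      exact ⟨w :: t, by simpa using ht⟩

section LabelSequences

variable {α : Type*}

theorem labelSeq_length {Λ : Type*} (lab : List α → α → α → Λ) :
    ∀ (ρ l : List α), (labelSeq lab ρ l).length = l.length - 1
  | _, [] | _, [_] => rfl
  | ρ, _ :: b :: t => by simp [labelSeq, labelSeq_length lab (ρ ++ [b]) (b :: t)]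

theorem labelSeq_prefix_of_prefix {Λ : Type*} (lab : List α → α → α → Λ) :
    ∀ (ρ : List α) {s m : List α}, s <+: m → labelSeq lab ρ s <+: labelSeq lab ρ m
  | _, [], _, _ | _, [_], _, _ => List.nil_prefix
  | ρ, a :: b :: s, m, ⟨t, ht⟩ => by
    subst ht
    simpa [labelSeq] using labelSeq_prefix_of_prefix lab (ρ ++ [b]) (List.prefix_append (b :: s) t)

theorem labelSeq_concat {Λ : Type*} (lab : List α → α → α → Λ) :
    ∀ (ρ l : List α) {x : α} (u : α), l.getLast? = some x →
      labelSeq lab ρ (l ++ [u]) = labelSeq lab ρ l ++ [lab (ρ ++ l.tail) x u]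
  | _, [], _, _, h => by simp at h
  | ρ, [a], _, _, h => by simp_all [labelSeq]
  | ρ, a :: b :: t, x, u, h => by
    have ih := labelSeq_concat lab (ρ ++ [b]) (b :: t) u (by simpa using h)
    simp_all [labelSeq]

end LabelSequences

theorem RootOf.labelSeq_concat {Λ : Type*} (lab : List P → P → P → Λ) {ρ : List P} {v : P}
    (hρ : RootOf ρ v) (a : P) :
    labelSeq lab [⊥] (ρ ++ [a]) = labelSeq lab [⊥] ρ ++ [lab ρ v a] := by
  rw [_root_.labelSeq_concat lab [⊥] ρ a hρ.2.2.1, List.singleton_append,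
    List.cons_head?_tail hρ.2.1]

theorem RootOf.lex_labelSeq_concat {lab : List P → P → P → ℤ} {ρ : List P} {v a a' : P}
    (hρ : RootOf ρ v) (h : lab ρ v a < lab ρ v a') :
    List.Lex (· < ·) (labelSeq lab [⊥] (ρ ++ [a])) (labelSeq lab [⊥] (ρ ++ [a'])) := by
  rw [hρ.labelSeq_concat, hρ.labelSeq_concat]
  exact List.Lex.append_left _ (List.Lex.rel h) _

namespace Enumerates

variable {Γ : List (List P)}

theorem maxChainOfP_getD (hΓ : Enumerates Γ) {i : ℕ} (hi : i < Γ.length) :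
    MaxChainOfP (Γ.getD i []) := by
  rw [List.getD_eq_getElem _ _ hi]
  exact (hΓ.2 _).mp (List.getElem_mem hi)

theorem prefix_getD_of_subset (hΓ : Enumerates Γ) {s : List P} {v : P} (hs : SatFromTo s ⊥ v)
    {i : ℕ} (hi : i < Γ.length) (hsub : s ⊆ Γ.getD i []) : s <+: Γ.getD i [] :=
  hs.2.2.2.prefix_of_subset (hΓ.maxChainOfP_getD hi).2.2.2.pairwise_lt
    (by rw [hs.2.1, (hΓ.maxChainOfP_getD hi).2.1]) hsub

theorem fidx_lt_length_and_prefix [Finite P] (hΓ : Enumerates Γ) {s : List P} {v : P}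
    (hs : SatFromTo s ⊥ v) : fidx Γ s < Γ.length ∧ s <+: Γ.getD (fidx Γ s) [] := by
  obtain ⟨t, ht⟩ := exists_maxChainOfP_append v hs
  have hlt : fidx Γ s < Γ.length :=
    List.findIdx_lt_length_of_exists
      ⟨s ++ t, (hΓ.2 _).mpr ht, by simpa using fun a ha => List.mem_append_left t ha⟩
  refine ⟨hlt, hΓ.prefix_getD_of_subset hs hlt fun a ha => ?_⟩
  rw [List.getD_eq_getElem _ _ hlt]
  exact @of_decide_eq_true _ _ (List.findIdx_getElem (w := hlt)) a ha

end Enumerates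

namespace AgreesWithLex

variable {lab : List P → P → P → ℤ} {Γ : List (List P)}

theorem lt_of_lex_of_prefix (hΓ : AgreesWithLex lab Γ) {i j : ℕ} (hi : i < Γ.length)
    (hj : j < Γ.length) {s s' : List P} (hlen : s.length = s'.length)
    (hsi : s <+: Γ.getD i []) (hsj : s' <+: Γ.getD j [])
    (h : List.Lex (· < ·) (labelSeq lab [⊥] s) (labelSeq lab [⊥] s')) : i < j := by
  have hlex : List.Lex (· < ·) (labelSeq lab [⊥] (Γ.getD i [])) (labelSeq lab [⊥] (Γ.getD j [])) :=
    h.of_isPrefix_of_length_eq (by simp [labelSeq_length, hlen])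
      (labelSeq_prefix_of_prefix lab _ hsi) (labelSeq_prefix_of_prefix lab _ hsj)
  rcases lt_trichotomy i j with hij | rfl | hij
  · exact hij
  · exact absurd hlex (fun h => asymm h h)
  · exact absurd hlex (hΓ.2 j i hij hi)

/-- If the labels differed, the chain of `Γ` through `ρ ++ [a]` would be out of lexicographic
order with one of the two chains through `ρ ++ [a']` enclosing it. -/
theorem lab_eq_of_sandwiched [Finite P] (hΓ : AgreesWithLex lab Γ) {ρ : List P} {v a a' : P}
    (hρ : RootOf ρ v) (ha : v ⋖ a) (hsw : Sandwiched Γ ρ v a a') : lab ρ v a' = lab ρ v a := by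
  obtain ⟨ha', hlt, l, hil, hl, hsub⟩ := hsw
  obtain ⟨hi, hpi⟩ := hΓ.1.fidx_lt_length_and_prefix (hρ.concat ha)
  obtain ⟨hk, hpk⟩ := hΓ.1.fidx_lt_length_and_prefix (hρ.concat ha')
  have hpl := hΓ.1.prefix_getD_of_subset (hρ.concat ha') hl fun w hw => hsub w hw
  rcases lt_trichotomy (lab ρ v a') (lab ρ v a) with h | h | h
  · exact absurd (hΓ.lt_of_lex_of_prefix hl hi (by simp) hpl hpi (hρ.lex_labelSeq_concat h))
      hil.not_gt
  · exact h
  · exact absurd (hΓ.lt_of_lex_of_prefix hi hk (by simp) hpi hpk (hρ.lex_labelSeq_concat h))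
      hlt.not_gt

theorem exists_detLabel_eq_fidx [Finite P] (hΓ : AgreesWithLex lab Γ) {ρ : List P} {v a : P}
    (hρ : RootOf ρ v) (ha : v ⋖ a) :
    ∃ a', v ⋖ a' ∧ lab ρ v a' = lab ρ v a ∧ detLabel Γ ρ v a = fidx Γ (ρ ++ [a']) := by
  induction hn : fidx Γ (ρ ++ [a]) using Nat.strong_induction_on generalizing a with
  | _ n ih =>
    rw [detLabel]
    split_ifs with h
    · have hsw : Sandwiched Γ ρ v a (Nat.find_spec h).choose := (Nat.find_spec h).choose_spec.1
      obtain ⟨a', ha', hlab, hdet⟩ := ih _ (hn ▸ hsw.2.1) hsw.1 rfl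
      exact ⟨a', ha', hlab.trans (hΓ.lab_eq_of_sandwiched hρ ha hsw), hdet⟩
    · exact ⟨a, ha, rfl, rfl⟩

theorem detLabeling_lt_detLabeling [Finite P] (hΓ : AgreesWithLex lab Γ) {ρ ρ' : List P}
    {v v' a a' : P} (hρ : RootOf ρ v) (hρ' : RootOf ρ' v') (hlen : ρ.length = ρ'.length)
    (ha : v ⋖ a) (ha' : v' ⋖ a')
    (h : List.Lex (· < ·) (labelSeq lab [⊥] ρ ++ [lab ρ v a])
      (labelSeq lab [⊥] ρ' ++ [lab ρ' v' a'])) :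
    detLabeling Γ ρ v a < detLabeling Γ ρ' v' a' := by
  obtain ⟨b, hb, hlab, hdet⟩ := hΓ.exists_detLabel_eq_fidx hρ ha
  obtain ⟨b', hb', hlab', hdet'⟩ := hΓ.exists_detLabel_eq_fidx hρ' ha'
  obtain ⟨hi, hpi⟩ := hΓ.1.fidx_lt_length_and_prefix (hρ.concat hb)
  obtain ⟨hj, hpj⟩ := hΓ.1.fidx_lt_length_and_prefix (hρ'.concat hb')
  unfold detLabeling
  rw [hdet, hdet', Nat.cast_lt]
  refine hΓ.lt_of_lex_of_prefix hi hj (by simp [hlen]) hpi hpj ?_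
  rwa [hρ.labelSeq_concat, hρ'.labelSeq_concat, hlab, hlab']

end AgreesWithLex

theorem stmt6_general {P : Type*} [PartialOrder P] [BoundedOrder P] [Fintype P]
    (lab : List P → P → P → ℤ)
    (Γ : List (List P)) (hΓ : AgreesWithLex lab Γ)
    (x u b y d : P) (r : List P) (hr : RootOf r x)
    (hxu : x ⋖ u) (hub : u ⋖ b) (hxy : x ⋖ y) (hyd : y ⋖ d) :
    (lab r x u < lab r x y → detLabeling Γ r x u < detLabeling Γ r x y) ∧
    (lab r x u = lab r x y → lab (r ++ [u]) u b < lab (r ++ [y]) y d →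
      detLabeling Γ (r ++ [u]) u b < detLabeling Γ (r ++ [y]) y d) := by
  refine ⟨fun h => hΓ.detLabeling_lt_detLabeling hr hr rfl hxu hxy
    (List.Lex.append_left _ (List.Lex.rel h) _), fun heq h => ?_⟩
  refine hΓ.detLabeling_lt_detLabeling (hr.concat hxu) (hr.concat hxy) (by simp) hub hyd ?_
  rw [hr.labelSeq_concat, hr.labelSeq_concat, heq, List.append_assoc, List.append_assoc]
  exact List.Lex.append_left _ (List.Lex.cons (List.Lex.rel h)) _

/-- Proposition 4.8: comparisons of labels of a TCL-labeling `lab` are preserved by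
the CE-labeling determined by a total order `Γ` agreeing with the lexicographic order
induced by `lab`. -/
theorem stmt6 {P : Type*} [PartialOrder P] [BoundedOrder P] [Fintype P]
    (lab : List P → P → P → ℤ) (hTCL : IsTCLLabeling lab)
    (Γ : List (List P)) (hΓ : AgreesWithLex lab Γ)
    (x u b y d : P) (r : List P) (hr : RootOf r x)
    (hxu : x ⋖ u) (hub : u ⋖ b) (hxy : x ⋖ y) (hyd : y ⋖ d) (hne : u ≠ y) :
    (lab r x u < lab r x y → detLabeling Γ r x u < detLabeling Γ r x y) ∧
    (lab r x u = lab r x y → lab (r ++ [u]) u b < lab (r ++ [y]) y d →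
      detLabeling Γ (r ++ [u]) u b < detLabeling Γ (r ++ [y]) y d) :=
  stmt6_general lab Γ hΓ x u b y d r hr hxu hub hxy hyd
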